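/- arXiv:2605.28367 — 2 statements merged into one kernel-verified Lean document; each statement's English description precedes it below -/
import Mathlib

section
/- Let a ∈ ℝ, b > 0, and let κ ≈ 0.2785 be the unique positive solution of κ + ln(κ) = -1. Then for any ε > 0, 0 ≤ |a|·b - a·b·tanh(κ·a·b/ε) ≤ ε. -/
lemma tanh_alt (t : ℝ) : Real.tanh t = (Real.exp (2*t) - 1) / (Real.exp (2*t) + 1) := by
  have h1 : Real.exp t + Real.exp (-t) ≠ 0 := by positivity
  have h2 : Real.exp (2*t) + 1 ≠ 0 := by positivity
  rw [Real.tanh_eq_sinh_div_cosh, Real.sinh_eq, Real.cosh_eq]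
  have h3 : (Real.exp t - Real.exp (-t)) / 2 / ((Real.exp t + Real.exp (-t)) / 2)
      = (Real.exp t - Real.exp (-t)) / (Real.exp t + Real.exp (-t)) := by
    field_simp
  rw [h3, div_eq_div_iff h1 h2]
  have : Real.exp (2*t) = Real.exp t * Real.exp t := by
    rw [← Real.exp_add]; ring_nf
  have hn : Real.exp (-t) * Real.exp t = 1 := by
    rw [← Real.exp_add]; simp
  linear_combination (-2*Real.exp (-t))*this + (-2*Real.exp t) * hn

lemma tanh_le_one (t : ℝ) : Real.tanh t ≤ 1 := by
  rw [tanh_alt]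
  rw [div_le_one (by positivity)]
  linarith

lemma key (κ : ℝ) (hκpos : 0 < κ) (hκ : κ + Real.log κ = -1) (s : ℝ) :
    s ≤ κ * (Real.exp s + 1) := by
  have h := Real.add_one_le_exp (s + Real.log κ)
  rw [Real.exp_add, Real.exp_log hκpos] at h
  nlinarith

/-- Polycarpou's smooth sliding-mode bound: for `κ` the unique positive solution of
`κ + log κ = -1`, any `a ∈ ℝ`, `b > 0`, `ε > 0` satisfy
`0 ≤ |a|·b - a·b·tanh(κ·a·b/ε) ≤ ε`. -/
theorem polycarpou_bound (κ a b ε : ℝ) (hκpos : 0 < κ)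
    (hκ : κ + Real.log κ = -1) (hb : 0 < b) (hε : 0 < ε) :
    0 ≤ |a| * b - a * b * Real.tanh (κ * (a * b) / ε) ∧
    |a| * b - a * b * Real.tanh (κ * (a * b) / ε) ≤ ε := by
  set x := a * b with hx
  have hax : |a| * b = |x| := by rw [hx, abs_mul, abs_of_pos hb]
  have hodd : x * Real.tanh (κ * x / ε) = |x| * Real.tanh (κ * |x| / ε) := by
    rcases le_or_gt 0 x with h | h
    · rw [abs_of_nonneg h]
    · rw [abs_of_neg h]
      have : κ * -x / ε = -(κ * x / ε) := by ring
      rw [this, Real.tanh_neg]; ring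
  rw [hax, hodd]
  set y := |x| with hy
  have hy0 : 0 ≤ y := abs_nonneg x
  set t := κ * y / ε with ht
  have ht0 : 0 ≤ t := by positivity
  constructor
  · have := tanh_le_one t
    nlinarith
  · rw [tanh_alt]
    have hE : (0:ℝ) < Real.exp (2*t) + 1 := by positivity
    have heq : y - y * ((Real.exp (2*t) - 1) / (Real.exp (2*t) + 1))
        = 2 * y / (Real.exp (2*t) + 1) := by
      field_simp; ring
    rw [heq, div_le_iff₀ hE]
    have hk := key κ hκpos hκ (2*t)
    have h2t : 2 * t = 2 * κ * y / ε := by rw [ht]; ring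
    have : 2 * κ * y / ε ≤ κ * (Real.exp (2*t) + 1) := by rw [← h2t]; exact hk
    have h3 : 2 * κ * y ≤ ε * (κ * (Real.exp (2*t) + 1)) := by
      rw [div_le_iff₀ hε] at this; linarith [this]
    nlinarith
end

section
/- For any x ∈ ℝ and any ε > 0, with κ the unique positive real satisfying κ + log κ = -1, we have 0 ≤ |x| - x · tanh(κ x / ε) ≤ ε. -/
lemma tanh_key (y t : ℝ) : y - y * Real.tanh t = 2 * y / (Real.exp (2 * t) + 1) := by
  rw [Real.tanh_eq_sinh_div_cosh, Real.sinh_eq, Real.cosh_eq]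
  have e2 : Real.exp (2 * t) = Real.exp t * Real.exp t := by rw [← Real.exp_add]; ring_nf
  have e1 : Real.exp t * Real.exp (-t) = 1 := by rw [← Real.exp_add]; simp
  have h1 : Real.exp t ≠ 0 := (Real.exp_pos t).ne'
  have h2 : Real.exp (2 * t) + 1 ≠ 0 := by positivity
  have h3 : (Real.exp t + Real.exp (-t)) / 2 ≠ 0 := by positivity
  field_simp
  linear_combination (norm := ring_nf) (2 * y * Real.exp (-t)) * e2 + (2 * y * Real.exp t) * e1

lemma tanh_abs_aux (κ ε y : ℝ) (hκpos : 0 < κ)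
    (hκ : κ + Real.log κ = -1) (hε : 0 < ε) (hy : 0 ≤ y) :
    0 ≤ y - y * Real.tanh (κ * y / ε) ∧
    y - y * Real.tanh (κ * y / ε) ≤ ε := by
  have hkey := tanh_key y (κ * y / ε)
  have hκexp : κ * Real.exp (1 + κ) = 1 := by
    have hl : Real.log κ = -1 - κ := by linarith
    have hk : κ = Real.exp (-1 - κ) := by rw [← hl, Real.exp_log hκpos]
    calc κ * Real.exp (1 + κ) = Real.exp (-1 - κ) * Real.exp (1 + κ) := by rw [← hk]
      _ = Real.exp (-1 - κ + (1 + κ)) := (Real.exp_add _ _).symm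
      _ = 1 := by norm_num
  set t : ℝ := κ * y / ε with ht
  have hexp : 2 * y / ε - 1 ≤ Real.exp (2 * t) := by
    have h1 : (2 * t - 1 - κ) + 1 ≤ Real.exp (2 * t - 1 - κ) := Real.add_one_le_exp _
    have h2 : Real.exp (2 * t) = Real.exp (2 * t - 1 - κ) * Real.exp (1 + κ) := by
      rw [← Real.exp_add]; ring_nf
    have h3 : 0 < Real.exp (1 + κ) := Real.exp_pos _
    have h4 : Real.exp (1 + κ) = 1 / κ := by
      field_simp; linarith
    have h5 : (2 * t - κ) * (1 / κ) ≤ Real.exp (2 * t - 1 - κ) * Real.exp (1 + κ) := by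
      rw [h4]
      exact mul_le_mul_of_nonneg_right (by linarith) (by positivity)
    have h6 : (2 * t - κ) * (1 / κ) = 2 * y / ε - 1 := by
      rw [ht]; field_simp
    rw [h2]; linarith [h6 ▸ h5]
  constructor
  · rw [hkey]; positivity
  · rw [hkey, div_le_iff₀ (by positivity : (0:ℝ) < Real.exp (2 * t) + 1)]
    have hfe : ε * (2 * y / ε) = 2 * y := by field_simp
    nlinarith [Real.exp_pos (2 * t)]

/-- For any `x ∈ ℝ` and `ε > 0`, with `κ` the unique positive real satisfying
`κ + log κ = -1`, we have `0 ≤ |x| - x·tanh(κx/ε) ≤ ε`. -/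
theorem tanh_abs_approx (κ x ε : ℝ) (hκpos : 0 < κ)
    (hκ : κ + Real.log κ = -1) (hε : 0 < ε) :
    0 ≤ |x| - x * Real.tanh (κ * x / ε) ∧
    |x| - x * Real.tanh (κ * x / ε) ≤ ε := by
  have hswap : x * Real.tanh (κ * x / ε) = |x| * Real.tanh (κ * |x| / ε) := by
    rcases abs_cases x with ⟨h1, h2⟩ | ⟨h1, h2⟩
    · rw [h1]
    · rw [h1, show κ * -x / ε = -(κ * x / ε) by ring, Real.tanh_neg]
      ring
  rw [hswap]
  exact tanh_abs_aux κ ε |x| hκpos hκ hε (abs_nonneg x)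
end
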